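/- arXiv:1907.07473 — 3 statements merged into one kernel-verified Lean document; each statement's English description precedes it below -/
import Mathlib

section
/- Let S be a commutative noetherian ring, let x ∈ S be a non-zerodivisor, and let A, B be n × n matrices over S with AB = BA = xE_n. Let Ā, B̄ : (S/(x))^n → (S/(x))^n be the S/(x)-linear maps induced by A and B. Then Ker Ā = Im B̄ and Ker B̄ = Im Ā; that is, the 2-periodic sequence ⋯ → (S/(x))^n —B̄→ (S/(x))^n —Ā→ (S/(x))^n —B̄→ ⋯ is exact. -/
universe u
open Matrix

lemma stmt2_aux {S : Type u} [CommRing S] {x : S}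
    (hx : x ∈ nonZeroDivisors S) {n : ℕ} (A B : Matrix (Fin n) (Fin n) S)
    (hAB : A * B = x • (1 : Matrix (Fin n) (Fin n) S))
    (hBA : B * A = x • (1 : Matrix (Fin n) (Fin n) S)) :
    LinearMap.ker (A.map (Ideal.Quotient.mk (Ideal.span {x}))).mulVecLin =
      LinearMap.range (B.map (Ideal.Quotient.mk (Ideal.span {x}))).mulVecLin := by
  set π := Ideal.Quotient.mk (Ideal.span {x}) with hπ
  ext v
  simp only [LinearMap.mem_ker, LinearMap.mem_range, Matrix.mulVecLin_apply]
  constructor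
  · intro hv
    -- lift v
    obtain ⟨w, hw⟩ : ∃ w : Fin n → S, (fun i => π (w i)) = v := by
      choose w hw using fun i => Ideal.Quotient.mk_surjective (v i)
      exact ⟨w, funext hw⟩
    -- A *ᵥ w ≡ 0 mod x componentwise
    have hAw : ∀ i, ∃ u : S, (A *ᵥ w) i = x * u := by
      intro i
      have : π ((A *ᵥ w) i) = 0 := by
        rw [π.map_mulVec]
        have : (π ∘ w) = v := hw
        rw [this]
        rw [hv]
        rfl
      rw [Ideal.Quotient.eq_zero_iff_mem, Ideal.mem_span_singleton] at this
      obtain ⟨u, hu⟩ := this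
      exact ⟨u, hu⟩
    choose u hu using hAw
    -- B *ᵥ (A *ᵥ w) = x • w and = x • (B *ᵥ u)
    have key : x • w = x • (B *ᵥ u) := by
      have h1 : B *ᵥ (A *ᵥ w) = x • w := by
        rw [Matrix.mulVec_mulVec, hBA, Matrix.smul_mulVec, Matrix.one_mulVec]
      have h2 : (A *ᵥ w) = x • u := funext hu
      rw [h2, Matrix.mulVec_smul] at h1
      exact h1.symm
    have hw' : w = B *ᵥ u := by
      funext i
      have := congrFun key i
      simp only [Pi.smul_apply, smul_eq_mul] at this
      have hz : (w i - (B *ᵥ u) i) * x = 0 := by linear_combination this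
      exact sub_eq_zero.mp ((mul_right_mem_nonZeroDivisors_eq_zero_iff hx).mp hz)
    refine ⟨fun i => π (u i), ?_⟩
    rw [← hw]
    funext i
    have := (π.map_mulVec B u i).symm
    rw [hw']
    exact this
  · rintro ⟨y, rfl⟩
    have : (A.map π) *ᵥ ((B.map π) *ᵥ y) = ((A * B).map π) *ᵥ y := by
      rw [Matrix.mulVec_mulVec, Matrix.map_mul]
    rw [this, hAB]
    have hx0 : π x = 0 := by
      rw [Ideal.Quotient.eq_zero_iff_mem]; exact Ideal.mem_span_singleton_self x
    have : ((x • (1 : Matrix (Fin n) (Fin n) S)).map π) = 0 := by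
      ext i j
      simp [Matrix.map_apply, Matrix.smul_apply, hx0]
    rw [this, Matrix.zero_mulVec]

/-- Proposition 7(3), first part: if `x` is a non-zerodivisor and `AB = BA = xE`, then the
`2`-periodic sequence `⋯ → (S/(x))^n —B̄→ (S/(x))^n —Ā→ (S/(x))^n —B̄→ ⋯` is exact, i.e.
`Ker Ā = Im B̄` and `Ker B̄ = Im Ā`. -/
theorem stmt2 {S : Type u} [CommRing S] [IsNoetherianRing S] {x : S}
    (hx : x ∈ nonZeroDivisors S) {n : ℕ} (A B : Matrix (Fin n) (Fin n) S)
    (hAB : A * B = x • (1 : Matrix (Fin n) (Fin n) S))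
    (hBA : B * A = x • (1 : Matrix (Fin n) (Fin n) S)) :
    LinearMap.ker (A.map (Ideal.Quotient.mk (Ideal.span {x}))).mulVecLin =
      LinearMap.range (B.map (Ideal.Quotient.mk (Ideal.span {x}))).mulVecLin ∧
    LinearMap.ker (B.map (Ideal.Quotient.mk (Ideal.span {x}))).mulVecLin =
      LinearMap.range (A.map (Ideal.Quotient.mk (Ideal.span {x}))).mulVecLin := by
  exact ⟨stmt2_aux hx A B hAB hBA, stmt2_aux hx B A hBA hAB⟩
end

section
/- Let S be a commutative noetherian ring, let x ∈ S be a non-zerodivisor, and let A, B be n × n matrices over S with AB = BA = xE_n. Let ᵗA and ᵗB denote the transposed matrices, and let ᵗĀ, ᵗB̄ : (S/(x))^n → (S/(x))^n be the induced S/(x)-linear maps. Then Ker ᵗĀ = Im ᵗB̄ and Ker ᵗB̄ = Im ᵗĀ; that is, the S/(x)-dual of the 2-periodic sequence ⋯ → (S/(x))^n —B̄→ (S/(x))^n —Ā→ (S/(x))^n → ⋯ is exact. -/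
/-!
Transposing exchanges the hypotheses `AB = xE` and `BA = xE`, so it suffices to show
`Ker Ā = Im B̄`. One inclusion is `ĀB̄ = 0`. For the other, a lift `w` of a vector in `Ker Ā`
satisfies `Aw = xu` for some `u`, hence `xw = BAw = xBu`, and `w = Bu` because `x` is a
non-zerodivisor.
-/

open Matrix

namespace Matrix

theorem map_mk_span_singleton_smul_one {S m : Type*} [CommRing S] [DecidableEq m] (x : S) :
    (x • (1 : Matrix m m S)).map (Ideal.Quotient.mk (Ideal.span {x})) = 0 := by
  ext i j
  simp

variable {S : Type*} [CommRing S] {m n : Type*} [Fintype m] [Fintype n] {x : S}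

theorem range_mulVecLin_map_le_ker_of_mul_eq_smul_one [DecidableEq m]
    (A : Matrix m n S) (B : Matrix n m S) (hAB : A * B = x • 1) :
    LinearMap.range (B.map (Ideal.Quotient.mk (Ideal.span {x}))).mulVecLin ≤
      LinearMap.ker (A.map (Ideal.Quotient.mk (Ideal.span {x}))).mulVecLin := by
  rintro _ ⟨t, rfl⟩
  rw [LinearMap.mem_ker, mulVecLin_apply, mulVecLin_apply, mulVec_mulVec, ← Matrix.map_mul, hAB,
    map_mk_span_singleton_smul_one, zero_mulVec]

theorem ker_mulVecLin_map_le_range_of_mul_eq_smul_one [DecidableEq n]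
    (hx : x ∈ nonZeroDivisors S) (A : Matrix m n S) (B : Matrix n m S) (hBA : B * A = x • 1) :
    LinearMap.ker (A.map (Ideal.Quotient.mk (Ideal.span {x}))).mulVecLin ≤
      LinearMap.range (B.map (Ideal.Quotient.mk (Ideal.span {x}))).mulVecLin := by
  intro v hv
  obtain ⟨w, rfl⟩ := Ideal.Quotient.mk_surjective.comp_left v
  have hAw_mem : ∀ i, x ∣ (A *ᵥ w) i := fun i => by
    rw [← Ideal.mem_span_singleton, ← Ideal.Quotient.eq_zero_iff_mem, RingHom.map_mulVec]
    exact congrFun hv i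
  choose u hu using hAw_mem
  have hAw : A *ᵥ w = x • u := funext hu
  have hBu : B *ᵥ u = w := by
    apply Module.Flat.isSMulRegular_of_nonZeroDivisors hx
    calc x • B *ᵥ u = B *ᵥ (A *ᵥ w) := by rw [hAw, mulVec_smul]
      _ = x • w := by rw [mulVec_mulVec, hBA, smul_mulVec, one_mulVec]
  refine ⟨Ideal.Quotient.mk _ ∘ u, funext fun i => ?_⟩
  rw [mulVecLin_apply, ← RingHom.map_mulVec, hBu]
  rfl

theorem ker_mulVecLin_map_eq_range_of_mul_eq_smul_one [DecidableEq m] [DecidableEq n]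
    (hx : x ∈ nonZeroDivisors S) (A : Matrix m n S) (B : Matrix n m S) (hAB : A * B = x • 1)
    (hBA : B * A = x • 1) :
    LinearMap.ker (A.map (Ideal.Quotient.mk (Ideal.span {x}))).mulVecLin =
      LinearMap.range (B.map (Ideal.Quotient.mk (Ideal.span {x}))).mulVecLin :=
  le_antisymm (ker_mulVecLin_map_le_range_of_mul_eq_smul_one hx A B hBA)
    (range_mulVecLin_map_le_ker_of_mul_eq_smul_one A B hAB)

end Matrix

theorem stmt3_general {S : Type u} [CommRing S] {x : S}
    (hx : x ∈ nonZeroDivisors S) {n : ℕ} (A B : Matrix (Fin n) (Fin n) S)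
    (hAB : A * B = x • (1 : Matrix (Fin n) (Fin n) S))
    (hBA : B * A = x • (1 : Matrix (Fin n) (Fin n) S)) :
    LinearMap.ker (A.transpose.map (Ideal.Quotient.mk (Ideal.span {x}))).mulVecLin =
      LinearMap.range (B.transpose.map (Ideal.Quotient.mk (Ideal.span {x}))).mulVecLin ∧
    LinearMap.ker (B.transpose.map (Ideal.Quotient.mk (Ideal.span {x}))).mulVecLin =
      LinearMap.range (A.transpose.map (Ideal.Quotient.mk (Ideal.span {x}))).mulVecLin := by
  have hAB' : Aᵀ * Bᵀ = x • 1 := by rw [← transpose_mul, hBA, transpose_smul, transpose_one]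
  have hBA' : Bᵀ * Aᵀ = x • 1 := by rw [← transpose_mul, hAB, transpose_smul, transpose_one]
  exact ⟨ker_mulVecLin_map_eq_range_of_mul_eq_smul_one hx Aᵀ Bᵀ hAB' hBA',
    ker_mulVecLin_map_eq_range_of_mul_eq_smul_one hx Bᵀ Aᵀ hBA' hAB'⟩

/-- Proposition 7(3), second part: if `x` is a non-zerodivisor and `AB = BA = xE`, then the
`S/(x)`-dual of the `2`-periodic sequence given by `Ā` and `B̄` is exact; equivalently the
`2`-periodic sequence given by the transposed matrices `ᵗĀ`, `ᵗB̄` is exact, i.e.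
`Ker ᵗĀ = Im ᵗB̄` and `Ker ᵗB̄ = Im ᵗĀ`. -/
theorem stmt3 {S : Type u} [CommRing S] [IsNoetherianRing S] {x : S}
    (hx : x ∈ nonZeroDivisors S) {n : ℕ} (A B : Matrix (Fin n) (Fin n) S)
    (hAB : A * B = x • (1 : Matrix (Fin n) (Fin n) S))
    (hBA : B * A = x • (1 : Matrix (Fin n) (Fin n) S)) :
    LinearMap.ker (A.transpose.map (Ideal.Quotient.mk (Ideal.span {x}))).mulVecLin =
      LinearMap.range (B.transpose.map (Ideal.Quotient.mk (Ideal.span {x}))).mulVecLin ∧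
    LinearMap.ker (B.transpose.map (Ideal.Quotient.mk (Ideal.span {x}))).mulVecLin =
      LinearMap.range (A.transpose.map (Ideal.Quotient.mk (Ideal.span {x}))).mulVecLin :=
  stmt3_general hx A B hAB hBA
end

section
/- Let S be a commutative noetherian ring, let x ∈ S be a non-zerodivisor, and let M ∈ MF(x). Then there exist an integer n ≥ 0 and an exact sequence of S/(x)-modules 0 → M → (S/(x))^n → (S/(x))^n → M → 0; in particular, M is isomorphic to a second syzygy of itself over S/(x). -/
/-! Let `0 → S^n --f--> S^m --g--> M → 0` present `M ∈ MF(x)`. Since `x` kills `M = coker f`,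
multiplication by `x` factors through `f`: there is `ψ` with `f ψ = x`, and then `ψ f = x` too.
As `x` is a non-zerodivisor, `ψ` is injective, so `n = m` and `(f, ψ)` is a matrix factorization
of `x`. Reducing modulo `x`, the map `M → (S/x)^n` induced by `ψ`, then `f mod x`, then the map
`(S/x)^n → M` induced by `g` form the required exact sequence: `f v ≡ 0` forces
`f v = x u = f (ψ u)`, so `v = ψ u`; likewise `ψ v ≡ 0` forces `v ∈ im f = ker g`. -/

/-- `MF S x M` : the finitely generated `S`-module `M` is killed by `x` and admits an
exact sequence `0 → S^n → S^m → M → 0`; i.e. `M` belongs to the class `MF(x)`. -/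
def MF (S : Type u) [CommRing S] (x : S) (M : Type u) [AddCommGroup M] [Module S M] : Prop :=
  (∀ m : M, x • m = 0) ∧
    ∃ (n m : ℕ) (f : (Fin n → S) →ₗ[S] (Fin m → S)) (g : (Fin m → S) →ₗ[S] M),
      Function.Injective f ∧ Function.Surjective g ∧ LinearMap.range f = LinearMap.ker g

open Function LinearMap

section Cokernel

variable {R N P M Q : Type*} [Ring R] [AddCommGroup N] [Module R N] [AddCommGroup P]
  [Module R P] [AddCommGroup M] [Module R M] [AddCommGroup Q] [Module R Q]

noncomputable def Function.Exact.desc {f : N →ₗ[R] P} {g : P →ₗ[R] M} (hfg : Exact f g)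
    (hg : Surjective g) (φ : P →ₗ[R] Q) (hφ : φ ∘ₗ f = 0) : M →ₗ[R] Q :=
  (range f).liftQ φ (range_le_ker_iff.mpr hφ) ∘ₗ (hfg.linearEquivOfSurjective hg).symm.toLinearMap

@[simp]
theorem Function.Exact.desc_apply {f : N →ₗ[R] P} {g : P →ₗ[R] M} (hfg : Exact f g)
    (hg : Surjective g) (φ : P →ₗ[R] Q) (hφ : φ ∘ₗ f = 0) (v : P) :
    hfg.desc hg φ hφ (g v) = φ v := by
  simp [Function.Exact.desc]

end Cokernel

section MatrixFactorization

variable {R P Q M : Type*} [CommRing R] [AddCommGroup P] [Module R P] [AddCommGroup Q] [Module R Q]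
  [AddCommGroup M] [Module R M] {x : R}

theorem exists_comp_eq_smul_of_exact {N : Type*} [AddCommGroup N] [Module R N]
    {f : N →ₗ[R] P} {g : P →ₗ[R] M} (hf : Injective f) (hfg : Exact f g)
    (hxM : ∀ m : M, x • m = 0) : ∃ ψ : P →ₗ[R] N, ∀ v, f (ψ v) = x • v := by
  have hrange : ∀ v, x • v ∈ range f := fun v => by
    rw [← hfg.linearMap_ker_eq, mem_ker, map_smul, hxM]
  refine ⟨(LinearEquiv.ofInjective f hf).symm ∘ₗ
    (x • LinearMap.id).codRestrict (range f) hrange, fun v => ?_⟩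
  exact congrArg Subtype.val ((LinearEquiv.ofInjective f hf).apply_symm_apply ⟨x • v, hrange v⟩)

variable {f ψ : P →ₗ[R] P} {g : P →ₗ[R] M} {π : P →ₗ[R] Q}

/-- `hπ` and `hπs` say that `π` identifies `Q` with `P ⧸ x • P`. -/
theorem exists_exact_of_matrixFactorization (hx : IsSMulRegular P x)
    (hfψ : ∀ v, f (ψ v) = x • v) (hψf : ∀ v, ψ (f v) = x • v)
    (hfg : Exact f g) (hg : Surjective g) (hπ : Exact (lsmul R P x) π) (hπs : Surjective π) :
    ∃ (e : M →ₗ[R] Q) (F : Q →ₗ[R] Q) (h : Q →ₗ[R] M),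
      Injective e ∧ Exact e F ∧ Exact F h ∧ Surjective h := by
  have hf : Injective f := fun v w hvw => hx <| show x • v = x • w by rw [← hψf, ← hψf, hvw]
  have hψ : Injective ψ := fun v w hvw => hx <| show x • v = x • w by rw [← hfψ, ← hfψ, hvw]
  have hπx : ∀ v, π (x • v) = 0 := fun v => (hπ _).mpr ⟨v, rfl⟩
  have hπker : ∀ v, π v = 0 → ∃ u, x • u = v := fun v => (hπ v).mp
  let e := hfg.desc hg (π ∘ₗ ψ) (by ext v; simp [hψf, hπx])
  let F := hπ.desc hπs (π ∘ₗ f) (by ext v; simp [hπx])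
  let h := hπ.desc hπs g (by ext v; simp [← hfψ, hfg.apply_apply_eq_zero])
  have he : ∀ v, e (g v) = π (ψ v) := hfg.desc_apply hg _ _
  have hF : ∀ v, F (π v) = π (f v) := hπ.desc_apply hπs _ _
  have hh : ∀ v, h (π v) = g v := hπ.desc_apply hπs _ _
  refine ⟨e, F, h, ?_, ?_, ?_, ?_⟩
  · rw [injective_iff_map_eq_zero]
    intro m hm
    obtain ⟨v, rfl⟩ := hg m
    obtain ⟨u, hu⟩ := hπker _ ((he v).symm.trans hm)
    obtain rfl : v = f u := hψ (by rw [hψf, hu])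
    exact hfg.apply_apply_eq_zero u
  · intro q
    obtain ⟨v, rfl⟩ := hπs q
    refine ⟨fun hv => ?_, ?_⟩
    · obtain ⟨u, hu⟩ := hπker _ ((hF v).symm.trans hv)
      obtain rfl : v = ψ u := hf (by rw [hfψ, hu])
      exact ⟨g u, he u⟩
    · rintro ⟨m, hm⟩
      obtain ⟨u, rfl⟩ := hg m
      rw [← hm, he, hF, hfψ, hπx]
  · intro q
    obtain ⟨v, rfl⟩ := hπs q
    rw [hh]
    refine ⟨fun hv => ?_, ?_⟩
    · obtain ⟨u, rfl⟩ := (hfg v).mp hv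
      exact ⟨π u, hF u⟩
    · rintro ⟨q', hq'⟩
      obtain ⟨u, rfl⟩ := hπs q'
      rw [← hh, ← hq', hF, hh]
      exact hfg.apply_apply_eq_zero u
  · intro m
    obtain ⟨v, rfl⟩ := hg m
    exact ⟨π v, hh v⟩

end MatrixFactorization

theorem exact_lsmul_compLeft_quotientMk {R : Type*} [CommRing R] (x : R) (ι : Type*) :
    Exact (lsmul R (ι → R) x) ((Ideal.Quotient.mkₐ R (Ideal.span {x})).toLinearMap.compLeft ι) := by
  intro v
  simp only [compLeft_apply, funext_iff, Pi.zero_apply, comp_apply, AlgHom.toLinearMap_apply,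
    Ideal.Quotient.mkₐ_eq_mk, Ideal.Quotient.eq_zero_iff_mem, Ideal.mem_span_singleton,
    Set.mem_range, lsmul_apply]
  refine ⟨fun hdvd => ?_, fun ⟨u, hu⟩ i => ⟨u i, by simp [← hu]⟩⟩
  choose u hu using hdvd
  exact ⟨u, fun i => (hu i).symm⟩

theorem exists_matrixFactorization_of_MF {S : Type u} [CommRing S] {x : S}
    (hx : x ∈ nonZeroDivisors S) {M : Type u} [AddCommGroup M] [Module S M] (hM : MF S x M) :
    ∃ (n : ℕ) (f ψ : (Fin n → S) →ₗ[S] (Fin n → S)) (g : (Fin n → S) →ₗ[S] M),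
      (∀ v, f (ψ v) = x • v) ∧ (∀ v, ψ (f v) = x • v) ∧ Exact f g ∧ Surjective g := by
  obtain ⟨hxM, n, m, f, g, hf, hg, hfg⟩ := hM
  rw [eq_comm, ← LinearMap.exact_iff] at hfg
  -- over the zero ring `n` and `m` need not agree, but everything is zero
  cases subsingleton_or_nontrivial S
  · have := Module.subsingleton S M
    exact ⟨0, 0, 0, 0, by simp, by simp, fun m => by simp [Subsingleton.elim m 0],
      fun m => ⟨0, Subsingleton.elim _ _⟩⟩
  obtain ⟨ψ, hfψ⟩ := exists_comp_eq_smul_of_exact hf hfg hxM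
  have hxm : IsSMulRegular (Fin m → S) x := Module.Flat.isSMulRegular_of_nonZeroDivisors hx
  have hψ : Injective ψ := fun v w hvw => hxm <| show x • v = x • w by rw [← hfψ, ← hfψ, hvw]
  obtain rfl : n = m := le_antisymm (le_of_fin_injective S f hf) (le_of_fin_injective S ψ hψ)
  exact ⟨n, f, ψ, g, hfψ, fun v => hf (by rw [hfψ, map_smul]), hfg, hg⟩

theorem stmt4_general {S : Type u} [CommRing S] {x : S}
    (hx : x ∈ nonZeroDivisors S) (M : Type u) [AddCommGroup M] [Module S M]
    [Module (S ⧸ Ideal.span {x}) M]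
    [IsScalarTower S (S ⧸ Ideal.span {x}) M] (hM : MF S x M) :
    ∃ (n : ℕ)
      (f : M →ₗ[S ⧸ Ideal.span {x}] (Fin n → S ⧸ Ideal.span {x}))
      (g : (Fin n → S ⧸ Ideal.span {x}) →ₗ[S ⧸ Ideal.span {x}]
        (Fin n → S ⧸ Ideal.span {x}))
      (h : (Fin n → S ⧸ Ideal.span {x}) →ₗ[S ⧸ Ideal.span {x}] M),
      Function.Injective f ∧ Function.Surjective h ∧
      LinearMap.range f = LinearMap.ker g ∧ LinearMap.range g = LinearMap.ker h := by
  obtain ⟨n, f, ψ, g, hfψ, hψf, hfg, hg⟩ := exists_matrixFactorization_of_MF hx hM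
  obtain ⟨e, F, h, he, heF, hFh, hh⟩ := exists_exact_of_matrixFactorization
    (Module.Flat.isSMulRegular_of_nonZeroDivisors hx) hfψ hψf hfg hg
    (exact_lsmul_compLeft_quotientMk x (Fin n)) Ideal.Quotient.mk_surjective.comp_left
  have hmk : Surjective (algebraMap S (S ⧸ Ideal.span {x})) := Ideal.Quotient.mk_surjective
  refine ⟨n, e.extendScalarsOfSurjective hmk, F.extendScalarsOfSurjective hmk,
    h.extendScalarsOfSurjective hmk, he, hh, ?_, ?_⟩ <;> rw [eq_comm, ← LinearMap.exact_iff]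
  exacts [heF, hFh]

/-- Proposition 7(3): if `x` is a non-zerodivisor and `M ∈ MF(x)`, then (viewing `M` as a
module over `S/(x)`) there is an exact sequence of `S/(x)`-modules
`0 → M → (S/(x))^n → (S/(x))^n → M → 0`; in particular `M` is isomorphic to a second
syzygy of itself over `S/(x)`. -/
theorem stmt4 {S : Type u} [CommRing S] [IsNoetherianRing S] {x : S}
    (hx : x ∈ nonZeroDivisors S) (M : Type u) [AddCommGroup M] [Module S M]
    [Module.Finite S M] [Module (S ⧸ Ideal.span {x}) M]
    [IsScalarTower S (S ⧸ Ideal.span {x}) M] (hM : MF S x M) :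
    ∃ (n : ℕ)
      (f : M →ₗ[S ⧸ Ideal.span {x}] (Fin n → S ⧸ Ideal.span {x}))
      (g : (Fin n → S ⧸ Ideal.span {x}) →ₗ[S ⧸ Ideal.span {x}]
        (Fin n → S ⧸ Ideal.span {x}))
      (h : (Fin n → S ⧸ Ideal.span {x}) →ₗ[S ⧸ Ideal.span {x}] M),
      Function.Injective f ∧ Function.Surjective h ∧
      LinearMap.range f = LinearMap.ker g ∧ LinearMap.range g = LinearMap.ker h :=
  stmt4_general hx M hM
end
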